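/- Shift property of the QWLCT: for a translation T_r f(x) = f(x − r) with r = (r₁, r₂) ∈ ℝ², G^{A₁,A₂}_φ{T_r f}(w, u) = e^{i r₁ω₁c₁} e^{−i (a₁r₁²/2)c₁} G^{A₁,A₂}_φ{f}(m, n) e^{j r₂ω₂c₂} e^{−j (a₂r₂²/2)c₂}, where m_i = w_i − a_i r_i and n_i = u_i − r_i for i = 1, 2. -/

import Mathlib

/-!
Substituting `x ↦ x + r` turns the transform of the translate into an integral of `f` against
the kernels evaluated at `x + r`. Since `c = (a d - 1) / b`, the chirp phase of the kernel satisfies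
`θ(x + r, ω) = r ω c - a r² c / 2 + θ(x, ω - a r)`, and the two extra terms, being real multiples of
the same imaginary unit as the kernel, split off as exponential factors: on the left for `i`, on
the right for `j`. These factors are units, so they leave the Bochner integral whether or not the
integrand is integrable.
-/

open MeasureTheory Real

noncomputable section

abbrev ℍ := Quaternion ℝ

def Qi : ℍ := ⟨0, 1, 0, 0⟩
def Qj : ℍ := ⟨0, 0, 1, 0⟩

/-- Quaternion exponential. -/
def qexp (q : ℍ) : ℍ := NormedSpace.exp q

/-- The kernel `K_{A₁}^{i}(x, ω)` of the QLCT (case `b ≠ 0`). -/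
def K1 (a b d : ℝ) (x ω : ℝ) : ℍ :=
  (1 / Real.sqrt (2 * π * b)) •
    qexp ((a / (2 * b) * x ^ 2 - x * ω / b + d / (2 * b) * ω ^ 2 - π / 4) • Qi)

/-- The kernel `K_{A₂}^{j}(x, ω)` of the QLCT (case `b ≠ 0`). -/
def K2 (a b d : ℝ) (x ω : ℝ) : ℍ :=
  (1 / Real.sqrt (2 * π * b)) •
    qexp ((a / (2 * b) * x ^ 2 - x * ω / b + d / (2 * b) * ω ^ 2 - π / 4) • Qj)

/-- The two-sided quaternion windowed linear canonical transform. -/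
def QWLCT (a₁ b₁ d₁ a₂ b₂ d₂ : ℝ) (φ f : ℝ × ℝ → ℍ) (w u : ℝ × ℝ) : ℍ :=
  ∫ x : ℝ × ℝ, K1 a₁ b₁ d₁ x.1 w.1 * f x * star (φ (x - u)) * K2 a₂ b₂ d₂ x.2 w.2

/-- Euclidean norm on `ℝ × ℝ`. -/
def nrm (x : ℝ × ℝ) : ℝ := Real.sqrt (x.1 ^ 2 + x.2 ^ 2)

section UnitMul

variable {α A : Type*} [MeasurableSpace α] {μ : Measure α} [NormedRing A] [NormedAlgebra ℝ A]

theorem integral_const_mul_of_isUnit {c : A} (hc : IsUnit c) (f : α → A) :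
    ∫ x, c * f x ∂μ = c * ∫ x, f x ∂μ := by
  by_cases hf : Integrable f μ
  · exact integral_const_mul_of_integrable hf
  · rw [integral_undef hf, integral_undef ((integrable_const_mul_iff hc f).not.2 hf), mul_zero]

theorem integral_mul_const_of_isUnit {c : A} (hc : IsUnit c) (f : α → A) :
    ∫ x, f x * c ∂μ = (∫ x, f x ∂μ) * c := by
  by_cases hf : Integrable f μ
  · exact integral_mul_const_of_integrable hf
  · rw [integral_undef hf, integral_undef ((integrable_mul_const_iff hc f).not.2 hf), zero_mul]

end UnitMul

theorem mem_eball_expSeries_radius (q : ℍ) :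
    q ∈ Metric.eball 0 (NormedSpace.expSeries ℝ ℍ).radius :=
  (NormedSpace.expSeries_radius_eq_top ℝ ℍ).symm ▸ edist_lt_top _ _

theorem qexp_smul_mul_qexp_smul (q : ℍ) (s t : ℝ) :
    qexp (s • q) * qexp (t • q) = qexp ((s + t) • q) := by
  rw [qexp, qexp, qexp, add_smul, NormedSpace.exp_add_of_commute_of_mem_ball
    (((Commute.refl q).smul_left s).smul_right t) (mem_eball_expSeries_radius _)
    (mem_eball_expSeries_radius _)]

theorem isUnit_qexp (q : ℍ) : IsUnit (qexp q) :=
  NormedSpace.isUnit_exp_of_mem_ball (mem_eball_expSeries_radius q)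

/-- `K1 a b d x ω` and `K2 a b d x ω` are definitionally `(1 / √(2πb)) • qexp (lctPhase a b d x ω • q)`
with `q = Qi`, resp. `q = Qj`. -/
def lctPhase (a b d x ω : ℝ) : ℝ :=
  a / (2 * b) * x ^ 2 - x * ω / b + d / (2 * b) * ω ^ 2 - π / 4

theorem lctPhase_add (a b c d : ℝ) (hA : a * d - b * c = 1) (hb : b ≠ 0) (x r ω : ℝ) :
    lctPhase a b d (x + r) ω = r * ω * c + -(a * r ^ 2 / 2 * c) + lctPhase a b d x (ω - a * r) := by
  obtain rfl : c = (a * d - 1) / b := by field_simp; linarith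
  unfold lctPhase
  field_simp
  ring

theorem K1_add (a b c d : ℝ) (hA : a * d - b * c = 1) (hb : b ≠ 0) (x r ω : ℝ) :
    K1 a b d (x + r) ω =
      qexp ((r * ω * c) • Qi) * qexp ((-(a * r ^ 2 / 2 * c)) • Qi) * K1 a b d x (ω - a * r) := by
  change _ • qexp (lctPhase a b d (x + r) ω • Qi) = _ * (_ • qexp (lctPhase a b d x _ • Qi))
  rw [qexp_smul_mul_qexp_smul, mul_smul_comm, qexp_smul_mul_qexp_smul, lctPhase_add a b c d hA hb]

theorem K2_add (a b c d : ℝ) (hA : a * d - b * c = 1) (hb : b ≠ 0) (x r ω : ℝ) :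
    K2 a b d (x + r) ω =
      K2 a b d x (ω - a * r) * (qexp ((r * ω * c) • Qj) * qexp ((-(a * r ^ 2 / 2 * c)) • Qj)) := by
  change _ • qexp (lctPhase a b d (x + r) ω • Qj) = (_ • qexp (lctPhase a b d x _ • Qj)) * _
  rw [qexp_smul_mul_qexp_smul, smul_mul_assoc, qexp_smul_mul_qexp_smul, lctPhase_add a b c d hA hb,
    add_comm (lctPhase _ _ _ _ _)]

theorem qwlct_shift_general (a₁ b₁ c₁ d₁ a₂ b₂ c₂ d₂ : ℝ)
    (hA₁ : a₁ * d₁ - b₁ * c₁ = 1) (hA₂ : a₂ * d₂ - b₂ * c₂ = 1)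
    (hb₁ : b₁ ≠ 0) (hb₂ : b₂ ≠ 0)
    (φ f : ℝ × ℝ → ℍ) (r w u : ℝ × ℝ) :
    QWLCT a₁ b₁ d₁ a₂ b₂ d₂ φ (fun x => f (x - r)) w u =
      qexp ((r.1 * w.1 * c₁) • Qi) * qexp ((-(a₁ * r.1 ^ 2 / 2 * c₁)) • Qi) *
        QWLCT a₁ b₁ d₁ a₂ b₂ d₂ φ f (w.1 - a₁ * r.1, w.2 - a₂ * r.2) (u.1 - r.1, u.2 - r.2) *
        (qexp ((r.2 * w.2 * c₂) • Qj) * qexp ((-(a₂ * r.2 ^ 2 / 2 * c₂)) • Qj)) := by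
  set E₁ := qexp ((r.1 * w.1 * c₁) • Qi) * qexp ((-(a₁ * r.1 ^ 2 / 2 * c₁)) • Qi)
  set E₂ := qexp ((r.2 * w.2 * c₂) • Qj) * qexp ((-(a₂ * r.2 ^ 2 / 2 * c₂)) • Qj)
  have hE₁ : IsUnit E₁ := (isUnit_qexp _).mul (isUnit_qexp _)
  have hE₂ : IsUnit E₂ := (isUnit_qexp _).mul (isUnit_qexp _)
  have h_translate : QWLCT a₁ b₁ d₁ a₂ b₂ d₂ φ (fun x => f (x - r)) w u =
      ∫ x : ℝ × ℝ, K1 a₁ b₁ d₁ (x.1 + r.1) w.1 * f x * star (φ (x - (u - r))) *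
        K2 a₂ b₂ d₂ (x.2 + r.2) w.2 := by
    rw [QWLCT, ← integral_add_right_eq_self _ r]
    simp only [Prod.fst_add, Prod.snd_add, add_sub_cancel_right, sub_sub_eq_add_sub]
  have h_kernels : ∀ x : ℝ × ℝ,
      K1 a₁ b₁ d₁ (x.1 + r.1) w.1 * f x * star (φ (x - (u - r))) * K2 a₂ b₂ d₂ (x.2 + r.2) w.2 =
        E₁ * (K1 a₁ b₁ d₁ x.1 (w.1 - a₁ * r.1) * f x * star (φ (x - (u - r))) *
          K2 a₂ b₂ d₂ x.2 (w.2 - a₂ * r.2)) * E₂ := fun x => by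
    rw [K1_add a₁ b₁ c₁ d₁ hA₁ hb₁, K2_add a₂ b₂ c₂ d₂ hA₂ hb₂]
    simp only [E₁, E₂, mul_assoc]
  rw [h_translate, funext h_kernels, integral_mul_const_of_isUnit hE₂,
    integral_const_mul_of_isUnit hE₁, QWLCT]
  rfl

/-- Shift property of the QWLCT. -/
theorem qwlct_shift (a₁ b₁ c₁ d₁ a₂ b₂ c₂ d₂ : ℝ)
    (hA₁ : a₁ * d₁ - b₁ * c₁ = 1) (hA₂ : a₂ * d₂ - b₂ * c₂ = 1)
    (hb₁ : b₁ ≠ 0) (hb₂ : b₂ ≠ 0)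
    (φ f : ℝ × ℝ → ℍ) (hφ : MemLp φ 2 (volume : Measure (ℝ × ℝ))) (hφ0 : φ ≠ 0)
    (hf : MemLp f 2 (volume : Measure (ℝ × ℝ))) (r w u : ℝ × ℝ) :
    QWLCT a₁ b₁ d₁ a₂ b₂ d₂ φ (fun x => f (x - r)) w u =
      qexp ((r.1 * w.1 * c₁) • Qi) * qexp ((-(a₁ * r.1 ^ 2 / 2 * c₁)) • Qi) *
        QWLCT a₁ b₁ d₁ a₂ b₂ d₂ φ f (w.1 - a₁ * r.1, w.2 - a₂ * r.2) (u.1 - r.1, u.2 - r.2) *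
        (qexp ((r.2 * w.2 * c₂) • Qj) * qexp ((-(a₂ * r.2 ^ 2 / 2 * c₂)) • Qj)) :=
  qwlct_shift_general a₁ b₁ c₁ d₁ a₂ b₂ c₂ d₂ hA₁ hA₂ hb₁ hb₂ φ f r w u
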